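/- arXiv:1708.01308 — 8 statements merged into one kernel-verified Lean document; each statement's English description precedes it below -/
import Mathlib

section
/- If λ: [0,1) → ℝ≥0 is Lipschitz continuous, then there exists a unique continuous function ρ: ℝ≥0 → [0,1) satisfying ρ(t) = ∫₀ᵗ λ(ρ(s))(1 - ρ(s)) ds for all t ≥ 0. -/
open Set MeasureTheory intervalIntegral

private lemma kol_exists_sol (F : ℝ → ℝ) (Kf : NNReal) (hF : LipschitzWith Kf F)
    (C : ℝ) (hC : 0 ≤ C) (hbd : ∀ x, |F x| ≤ C) (T : ℝ) (hT : 0 ≤ T) :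
    ∃ f : ℝ → ℝ, f 0 = 0 ∧ ∀ t ∈ Set.Icc (0:ℝ) T,
      HasDerivWithinAt f (F (f t)) (Set.Icc (0:ℝ) T) t := by
  have hpl : IsPicardLindelof (fun _ x => F x) (tmin := 0) (tmax := T) ⟨0, le_rfl, hT⟩ 0
      (C.toNNReal * T.toNNReal) 0 C.toNNReal Kf :=
    { lipschitzOnWith := fun _ _ => hF.lipschitzOnWith
      continuousOn := fun _ _ => continuousOn_const
      norm_le := fun _ _ x _ => by
        rw [Real.norm_eq_abs, Real.coe_toNNReal _ hC]; exact hbd x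
      mul_max_le := by
        simp only [NNReal.coe_mul, Real.coe_toNNReal _ hC, Real.coe_toNNReal _ hT,
          NNReal.coe_zero, sub_zero, sub_self, max_eq_left hT, le_refl] }
  exact hpl.exists_eq_forall_mem_Icc_hasDerivWithinAt₀

/-- If `λ : [0,1) → ℝ≥0` is Lipschitz and nonnegative, then there exists a unique continuous
function `ρ : ℝ₊ → [0,1)` satisfying the Kolmogorov equation
`ρ(t) = ∫₀ᵗ λ(ρ(s))(1 - ρ(s)) ds` for all `t ≥ 0`. -/
theorem kolmogorov_equation_exists_unique
    (lam : ℝ → ℝ) (K : NNReal)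
    (hlip : LipschitzOnWith K lam (Set.Ico (0:ℝ) 1))
    (hnonneg : ∀ r ∈ Set.Ico (0:ℝ) 1, 0 ≤ lam r) :
    ∃ ρ : ℝ → ℝ,
      (ContinuousOn ρ (Set.Ici 0) ∧ (∀ t ≥ (0:ℝ), ρ t ∈ Set.Ico (0:ℝ) 1) ∧
        (∀ t ≥ (0:ℝ), ρ t = ∫ s in (0:ℝ)..t, lam (ρ s) * (1 - ρ s))) ∧
      (∀ ρ' : ℝ → ℝ,
        (ContinuousOn ρ' (Set.Ici 0) ∧ (∀ t ≥ (0:ℝ), ρ' t ∈ Set.Ico (0:ℝ) 1) ∧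
          (∀ t ≥ (0:ℝ), ρ' t = ∫ s in (0:ℝ)..t, lam (ρ' s) * (1 - ρ' s))) →
        ∀ t ≥ (0:ℝ), ρ' t = ρ t) := by
  classical
  obtain ⟨g, hg_lip, hg_eq⟩ := hlip.extend_real
  have h0mem : (0:ℝ) ∈ Ico (0:ℝ) 1 := ⟨le_rfl, one_pos⟩
  have hlam0 : 0 ≤ lam 0 := hnonneg 0 h0mem
  set Mb : ℝ := lam 0 + K with hMbdef
  have hMb0 : 0 ≤ Mb := by positivity
  have hlam_le : ∀ r ∈ Ico (0:ℝ) 1, lam r ≤ Mb := by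
    intro r hr
    have h := hlip.dist_le_mul r hr 0 h0mem
    rw [Real.dist_eq, Real.dist_eq, sub_zero] at h
    have h1 : lam r - lam 0 ≤ (K:ℝ) * |r| := (abs_le.1 h).2
    have h2 : |r| ≤ 1 := by rw [abs_of_nonneg hr.1]; exact hr.2.le
    nlinarith [K.coe_nonneg]
  set b : ℝ → ℝ := fun x => max 0 (min (g x) Mb) with hbdef
  set c : ℝ → ℝ := fun x => max 0 (min (1 - x) 1) with hcdef
  set F : ℝ → ℝ := fun x => b x * c x with hFdef
  have hb0 : ∀ x, 0 ≤ b x := fun x => le_max_left _ _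
  have hbM : ∀ x, b x ≤ Mb := fun x => max_le hMb0 (min_le_right _ _)
  have hc0 : ∀ x, 0 ≤ c x := fun x => le_max_left _ _
  have hc1 : ∀ x, c x ≤ 1 := fun x => max_le zero_le_one (min_le_right _ _)
  have hbeq : ∀ x ∈ Ico (0:ℝ) 1, b x = lam x := by
    intro x hx
    have : g x = lam x := (hg_eq hx).symm
    simp only [hbdef, this]
    rw [min_eq_left (hlam_le x hx), max_eq_right (hnonneg x hx)]
  have hceq : ∀ x ∈ Icc (0:ℝ) 1, c x = 1 - x := by
    intro x hx
    simp only [hcdef]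
    rw [min_eq_left (by linarith [hx.1]), max_eq_right (by linarith [hx.2])]
  have hFeq : ∀ x ∈ Ico (0:ℝ) 1, F x = lam x * (1 - x) := by
    intro x hx
    simp only [hFdef]
    rw [hbeq x hx, hceq x ⟨hx.1, hx.2.le⟩]
  -- Lipschitz bounds
  have hb_lip : ∀ x y : ℝ, |b x - b y| ≤ (K:ℝ) * |x - y| := by
    intro x y
    have h1 : |b x - b y| ≤ max |min (g x) Mb - min (g y) Mb| |(0:ℝ) - 0| := by
      simpa using abs_max_sub_max_le_max (0:ℝ) (min (g x) Mb) 0 (min (g y) Mb)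
    have h2 : |min (g x) Mb - min (g y) Mb| ≤ max |g x - g y| |(Mb:ℝ) - Mb| := by
      simpa using abs_min_sub_min_le_max (g x) Mb (g y) Mb
    have h3 : |g x - g y| ≤ (K:ℝ) * |x - y| := by
      have := hg_lip.dist_le_mul x y
      rwa [Real.dist_eq, Real.dist_eq] at this
    simp only [sub_self, abs_zero] at h1 h2
    calc |b x - b y| ≤ max |min (g x) Mb - min (g y) Mb| 0 := h1
      _ ≤ |min (g x) Mb - min (g y) Mb| := max_le (le_refl _) (abs_nonneg _)
      _ ≤ max |g x - g y| 0 := h2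
      _ ≤ |g x - g y| := max_le (le_refl _) (abs_nonneg _)
      _ ≤ (K:ℝ) * |x - y| := h3
  have hc_lip : ∀ x y : ℝ, |c x - c y| ≤ |x - y| := by
    intro x y
    have h1 : |c x - c y| ≤ max |min (1-x) 1 - min (1-y) 1| |(0:ℝ) - 0| := by
      simpa using abs_max_sub_max_le_max (0:ℝ) (min (1-x) 1) 0 (min (1-y) 1)
    have h2 : |min (1-x) 1 - min (1-y) 1| ≤ max |(1-x) - (1-y)| |(1:ℝ) - 1| := by
      simpa using abs_min_sub_min_le_max (1-x) 1 (1-y) 1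
    have h3 : |(1-x) - (1-y)| = |x - y| := by rw [show (1-x) - (1-y) = -(x - y) by ring, abs_neg]
    simp only [sub_self, abs_zero] at h1 h2
    calc |c x - c y| ≤ max |min (1-x) 1 - min (1-y) 1| 0 := h1
      _ ≤ |min (1-x) 1 - min (1-y) 1| := max_le (le_refl _) (abs_nonneg _)
      _ ≤ max |(1-x) - (1-y)| 0 := h2
      _ ≤ |(1-x) - (1-y)| := max_le (le_refl _) (abs_nonneg _)
      _ = |x - y| := h3
  have hF_lip : LipschitzWith (K + Mb.toNNReal) F := by
    apply LipschitzWith.of_dist_le_mul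
    intro x y
    rw [Real.dist_eq, Real.dist_eq]
    have key : F x - F y = (b x - b y) * c x + b y * (c x - c y) := by
      simp only [hFdef]; ring
    have h1 : |F x - F y| ≤ |b x - b y| * c x + b y * |c x - c y| := by
      rw [key]
      refine (abs_add_le _ _).trans ?_
      rw [abs_mul, abs_mul, abs_of_nonneg (hc0 x), abs_of_nonneg (hb0 y)]
    have h2 : |b x - b y| * c x ≤ (K:ℝ) * |x - y| := by
      calc |b x - b y| * c x ≤ |b x - b y| * 1 :=
            mul_le_mul_of_nonneg_left (hc1 x) (abs_nonneg _)
        _ = |b x - b y| := mul_one _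
        _ ≤ (K:ℝ) * |x - y| := hb_lip x y
    have h3 : b y * |c x - c y| ≤ Mb * |x - y| :=
      mul_le_mul (hbM y) (hc_lip x y) (abs_nonneg _) hMb0
    have hco : ((K + Mb.toNNReal : NNReal) : ℝ) = (K:ℝ) + Mb := by
      rw [NNReal.coe_add, Real.coe_toNNReal _ hMb0]
    rw [hco, add_mul]
    linarith
  have hF0 : ∀ x, 0 ≤ F x := fun x => mul_nonneg (hb0 x) (hc0 x)
  have hFbd : ∀ x, |F x| ≤ Mb := by
    intro x
    rw [abs_of_nonneg (hF0 x)]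
    calc F x ≤ Mb * 1 := mul_le_mul (hbM x) (hc1 x) (hc0 x) hMb0
      _ = Mb := mul_one _
  have hFcont : Continuous F := hF_lip.continuous
  -- solutions on each [0, n]
  have hex : ∀ n : ℕ, ∃ f : ℝ → ℝ, f 0 = 0 ∧ ∀ t ∈ Icc (0:ℝ) (n:ℝ),
      HasDerivWithinAt f (F (f t)) (Icc (0:ℝ) (n:ℝ)) t :=
    fun n => kol_exists_sol F _ hF_lip Mb hMb0 hFbd (n:ℝ) n.cast_nonneg
  choose sol hsol0 hsolD using hex
  have hcontI : ∀ n : ℕ, ContinuousOn (sol n) (Icc (0:ℝ) (n:ℝ)) :=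
    fun n t ht => ((hsolD n) t ht).continuousWithinAt
  have hIci : ∀ n : ℕ, ∀ t ∈ Ico (0:ℝ) (n:ℝ),
      HasDerivWithinAt (sol n) (F (sol n t)) (Ici t) t :=
    fun n t ht => ((hsolD n) t (Ico_subset_Icc_self ht)).mono_of_mem_nhdsWithin
      (Icc_mem_nhdsGE_of_mem ht)
  -- uniqueness engine on [0, T]
  have huniq : ∀ (T : ℝ) (f h : ℝ → ℝ), ContinuousOn f (Icc 0 T) →
      (∀ t ∈ Ico (0:ℝ) T, HasDerivWithinAt f (F (f t)) (Ici t) t) →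
      ContinuousOn h (Icc 0 T) →
      (∀ t ∈ Ico (0:ℝ) T, HasDerivWithinAt h (F (h t)) (Ici t) t) →
      f 0 = h 0 → EqOn f h (Icc 0 T) := by
    intro T f h hf hf' hh hh' h0
    exact ODE_solution_unique (v := fun _ x => F x) (fun _ => hF_lip) hf hf' hh hh' h0
  -- consistency of the family `sol`
  have hcons : ∀ m n : ℕ, (m:ℝ) ≤ (n:ℝ) → EqOn (sol m) (sol n) (Icc (0:ℝ) (m:ℝ)) := by
    intro m n hmn
    refine huniq (m:ℝ) (sol m) (sol n) (hcontI m) (hIci m)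
      ((hcontI n).mono (Icc_subset_Icc le_rfl hmn))
      (fun t ht => hIci n t ⟨ht.1, lt_of_lt_of_le ht.2 hmn⟩)
      ((hsol0 m).trans (hsol0 n).symm)
  -- the glued solution
  set ρ : ℝ → ℝ := fun t => sol ⌈max t 0⌉₊ (max t 0) with hρdef
  have hρ_eq : ∀ n : ℕ, ∀ t ∈ Icc (0:ℝ) (n:ℝ), ρ t = sol n t := by
    intro n t ht
    have hmax : max t 0 = t := max_eq_left ht.1
    simp only [hρdef, hmax]
    rcases le_total ((⌈t⌉₊:ℝ)) ((n:ℝ)) with h | h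
    · exact hcons _ _ h ⟨ht.1, Nat.le_ceil t⟩
    · exact (hcons n ⌈t⌉₊ h ht).symm
  -- nonnegativity
  have hmono : ∀ n : ℕ, MonotoneOn (sol n) (Icc (0:ℝ) (n:ℝ)) := by
    intro n
    have hDA : ∀ t ∈ interior (Icc (0:ℝ) (n:ℝ)), HasDerivAt (sol n) (F (sol n t)) t := by
      intro t ht
      rw [interior_Icc] at ht
      exact ((hsolD n) t (Ioo_subset_Icc_self ht)).hasDerivAt (Icc_mem_nhds ht.1 ht.2)
    refine monotoneOn_of_deriv_nonneg (convex_Icc _ _) (hcontI n)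
      (fun t ht => (hDA t ht).differentiableAt.differentiableWithinAt)
      (fun t ht => ?_)
    rw [(hDA t ht).deriv]; exact hF0 _
  have hnn : ∀ n : ℕ, ∀ t ∈ Icc (0:ℝ) (n:ℝ), 0 ≤ sol n t := by
    intro n t ht
    calc (0:ℝ) = sol n 0 := (hsol0 n).symm
      _ ≤ sol n t := hmono n ⟨le_rfl, n.cast_nonneg⟩ ht ht.1
  -- upper bound via fencing
  set M : ℝ := Mb + 1 with hMdef
  have hM0 : 0 < M := by positivity
  have hub : ∀ n : ℕ, ∀ t ∈ Icc (0:ℝ) (n:ℝ), sol n t ≤ 1 - Real.exp (-M * t) := by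
    intro n
    have hB : ∀ x : ℝ, HasDerivAt (fun u => 1 - Real.exp (-M * u)) (M * Real.exp (-M * x)) x := by
      intro x
      have h1 : HasDerivAt (fun u : ℝ => -M * u) (-M) x := by
        simpa using (hasDerivAt_id x).const_mul (-M)
      have h2 := (Real.hasDerivAt_exp (-M * x)).comp x h1
      have h3 := h2.const_sub 1
      exact h3.congr_deriv (by ring)
    intro t ht
    refine image_le_of_deriv_right_lt_deriv_boundary (hcontI n) (hIci n) ?_ hB ?_ ht
    · rw [hsol0]; simp
    · intro x hx hfx
      have hx0 : 0 ≤ x := hx.1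
      have hexp1 : Real.exp (-M * x) ≤ 1 := by
        apply Real.exp_le_one_iff.2
        nlinarith
      have hexp0 : 0 < Real.exp (-M * x) := Real.exp_pos _
      have hmem : sol n x ∈ Icc (0:ℝ) 1 := by
        constructor
        · rw [hfx]; linarith
        · rw [hfx]; linarith
      have hle : F (sol n x) ≤ Mb * (1 - sol n x) := by
        have hc' : c (sol n x) = 1 - sol n x := hceq _ hmem
        calc F (sol n x) = b (sol n x) * c (sol n x) := rfl
          _ ≤ Mb * c (sol n x) := mul_le_mul_of_nonneg_right (hbM _) (hc0 _)
          _ = Mb * (1 - sol n x) := by rw [hc']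
      have heq : (1:ℝ) - sol n x = Real.exp (-M * x) := by rw [hfx]; ring
      rw [heq] at hle
      have : Mb * Real.exp (-M * x) < M * Real.exp (-M * x) := by
        have : Mb < M := by simp [hMdef]
        nlinarith
      linarith
  have hlt1 : ∀ n : ℕ, ∀ t ∈ Icc (0:ℝ) (n:ℝ), sol n t < 1 := by
    intro n t ht
    have h1 := hub n t ht
    have h2 := Real.exp_pos (-M * t)
    linarith
  -- integral equation for sol n
  have hint : ∀ n : ℕ, ∀ t ∈ Icc (0:ℝ) (n:ℝ), sol n t = ∫ s in (0:ℝ)..t, F (sol n s) := by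
    intro n t ht
    have hsub : Icc (0:ℝ) t ⊆ Icc (0:ℝ) (n:ℝ) := Icc_subset_Icc le_rfl ht.2
    have hco : ContinuousOn (sol n) (Icc (0:ℝ) t) := (hcontI n).mono hsub
    have h1 := intervalIntegral.integral_eq_sub_of_hasDeriv_right_of_le ht.1 hco
      (fun x hx => ((hIci n x ⟨hx.1.le, lt_of_lt_of_le hx.2 ht.2⟩).mono Ioi_subset_Ici_self))
      ((hFcont.comp_continuousOn hco).intervalIntegrable_of_Icc ht.1)
    rw [hsol0, sub_zero] at h1
    exact h1.symm
  refine ⟨ρ, ⟨?_, ?_, ?_⟩, ?_⟩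
  · -- continuity
    intro t ht
    set n : ℕ := ⌈t⌉₊ + 1 with hndef
    have htn : t < (n:ℝ) := by
      have h1 := Nat.le_ceil t
      have h2 : ((⌈t⌉₊ : ℕ) : ℝ) < ((⌈t⌉₊ + 1 : ℕ) : ℝ) := by exact_mod_cast Nat.lt_succ_self _
      exact lt_of_le_of_lt h1 h2
    have hnbhd : Icc (0:ℝ) (n:ℝ) ∈ nhdsWithin t (Ici (0:ℝ)) := by
      rw [← Ici_inter_Iic]
      exact Filter.inter_mem self_mem_nhdsWithin
        (mem_nhdsWithin_of_mem_nhds (Iic_mem_nhds htn))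
    have hcw : ContinuousWithinAt (sol n) (Ici (0:ℝ)) t :=
      ((hcontI n) t ⟨ht, htn.le⟩).mono_of_mem_nhdsWithin hnbhd
    have hev : ρ =ᶠ[nhdsWithin t (Ici (0:ℝ))] sol n :=
      Filter.eventuallyEq_of_mem hnbhd (fun y hy => hρ_eq n y hy)
    exact hcw.congr_of_eventuallyEq hev (hρ_eq n t ⟨ht, htn.le⟩)
  · -- membership
    intro t ht
    have htn : t ∈ Icc (0:ℝ) ((⌈t⌉₊ : ℕ):ℝ) := ⟨ht, Nat.le_ceil t⟩
    rw [hρ_eq ⌈t⌉₊ t htn]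
    exact ⟨hnn _ t htn, hlt1 _ t htn⟩
  · -- integral equation
    intro t ht
    have htn : t ∈ Icc (0:ℝ) ((⌈t⌉₊ : ℕ):ℝ) := ⟨ht, Nat.le_ceil t⟩
    rw [hρ_eq ⌈t⌉₊ t htn, hint ⌈t⌉₊ t htn]
    apply intervalIntegral.integral_congr
    intro s hs
    rw [uIcc_of_le ht] at hs
    have hsn : s ∈ Icc (0:ℝ) ((⌈t⌉₊ : ℕ):ℝ) := ⟨hs.1, hs.2.trans htn.2⟩
    have hρs : ρ s = sol ⌈t⌉₊ s := hρ_eq ⌈t⌉₊ s hsn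
    have hmem' : ρ s ∈ Ico (0:ℝ) 1 := by
      rw [hρs]; exact ⟨hnn _ s hsn, hlt1 _ s hsn⟩
    show F (sol ⌈t⌉₊ s) = lam (ρ s) * (1 - ρ s)
    rw [← hρs]
    exact (hFeq _ hmem')
  · -- uniqueness
    rintro ρ' ⟨hc', hm', hi'⟩ t ht
    set σ : ℝ → ℝ := fun s => ρ' (max s 0) with hσdef
    set G : ℝ → ℝ := fun s => F (σ s) with hGdef
    have hσcont : Continuous σ :=
      hc'.comp_continuous (continuous_id.max continuous_const) (fun x => mem_Ici.2 (le_max_right _ _))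
    have hGcont : Continuous G := hFcont.comp hσcont
    have hρ'int : ∀ u ≥ (0:ℝ), ρ' u = ∫ s in (0:ℝ)..u, G s := by
      intro u hu
      rw [hi' u hu]
      apply intervalIntegral.integral_congr
      intro s hs
      rw [uIcc_of_le hu] at hs
      have hms := hm' s hs.1
      have hmax : max s 0 = s := max_eq_left hs.1
      simp only [hGdef, hσdef, hmax]
      exact (hFeq _ hms).symm
    have hρ'deriv : ∀ s ∈ Ici (0:ℝ), HasDerivWithinAt ρ' (F (ρ' s)) (Ici s) s := by
      intro s hs
      have hI : HasDerivAt (fun u => ∫ x in (0:ℝ)..u, G x) (G s) s :=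
        intervalIntegral.integral_hasDerivAt_right (hGcont.intervalIntegrable _ _)
          (hGcont.stronglyMeasurableAtFilter _ _) hGcont.continuousAt
      have hGs : G s = F (ρ' s) := by
        simp only [hGdef, hσdef, max_eq_left (mem_Ici.1 hs)]
      have hW : HasDerivWithinAt (fun u => ∫ x in (0:ℝ)..u, G x) (F (ρ' s)) (Ici s) s := by
        rw [← hGs]; exact hI.hasDerivWithinAt
      exact hW.congr (fun y hy => hρ'int y (le_trans hs hy)) (hρ'int s hs)
    set n : ℕ := ⌈t⌉₊ with hndef
    have htn : t ∈ Icc (0:ℝ) ((n:ℕ):ℝ) := ⟨ht, Nat.le_ceil t⟩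
    have h00 : ρ' 0 = sol n 0 := by
      rw [hi' 0 le_rfl, intervalIntegral.integral_same, hsol0]
    have hEq : EqOn ρ' (sol n) (Icc (0:ℝ) (n:ℝ)) :=
      huniq (n:ℝ) ρ' (sol n) (hc'.mono Icc_subset_Ici_self)
        (fun s hs => hρ'deriv s hs.1) (hcontI n) (hIci n) h00
    rw [hρ_eq n t htn]
    exact hEq htn
end

section
/- Let R: [0,1] → ℝ≥0 be decreasing and continuous. Define v(r) = (1/(2√(1-r))) ∫_r^1 R(y)/√(1-y) dy for r ∈ [0,1). Then v satisfies the ODE R(r) - v(r) + 2(1-r) v'(r) = 0 for all r ∈ [0,1) where R is continuous, and v(r) → R(1) as r → 1⁻. -/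
open Set MeasureTheory intervalIntegral Real Filter

/-- The equilibrium value function `v(r) = (1/(2√(1-r))) ∫_r^1 R(y)/√(1-y) dy` of the mean
field competition satisfies the ODE `R(r) - v(r) + 2(1-r) v'(r) = 0` on `[0,1)` and
`v(r) → R(1)` as `r → 1⁻`. -/
theorem value_function_ODE
    (R : ℝ → ℝ)
    (hmono : AntitoneOn R (Set.Icc 0 1))
    (hcont : ContinuousOn R (Set.Icc 0 1))
    (hnonneg : ∀ r ∈ Set.Icc (0:ℝ) 1, 0 ≤ R r)
    (v : ℝ → ℝ)
    (hv : ∀ r ∈ Set.Ico (0:ℝ) 1,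
      v r = (1 / (2 * Real.sqrt (1 - r))) * ∫ y in r..1, R y / Real.sqrt (1 - y)) :
    (∀ r ∈ Set.Ico (0:ℝ) 1, ∃ d : ℝ,
        HasDerivWithinAt v d (Set.Ico (0:ℝ) 1) r ∧ R r - v r + 2 * (1 - r) * d = 0) ∧
    Tendsto v (nhdsWithin 1 (Set.Iio 1)) (nhds (R 1)) := by
  set p : ℝ → ℝ := fun y => max 0 (min y 1) with hp
  have hpmem : ∀ y, p y ∈ Set.Icc (0:ℝ) 1 :=
    fun y => ⟨le_max_left _ _, max_le (by norm_num) (min_le_right _ _)⟩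
  have hpeq : ∀ y ∈ Set.Icc (0:ℝ) 1, p y = y := by
    intro y hy
    simp [hp, min_eq_left hy.2, max_eq_right hy.1]
  set Rc : ℝ → ℝ := fun y => R (p y) with hRcdef
  have hRc_cont : Continuous Rc :=
    hcont.comp_continuous (by fun_prop) hpmem
  have hRc_eq : ∀ y ∈ Set.Icc (0:ℝ) 1, Rc y = R y := by
    intro y hy; simp [hRcdef, hpeq y hy]
  have hRc_le : ∀ y, Rc y ≤ R 0 := by
    intro y
    exact hmono (by norm_num) (hpmem y) (hpmem y).1
  have hRc_nonneg : ∀ y, 0 ≤ Rc y := fun y => hnonneg _ (hpmem y)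
  set g : ℝ → ℝ := fun y => Rc y / Real.sqrt (1 - y) with hgdef
  have hg_meas : Measurable g :=
    hRc_cont.measurable.div
      ((Real.continuous_sqrt.comp (continuous_const.sub continuous_id)).measurable)
  have hgrpow : ∀ y : ℝ, y ≤ 1 → g y = Rc y * (1 - y) ^ (-(1/2) : ℝ) := by
    intro y hy
    have h1y : 0 ≤ 1 - y := by linarith
    simp only [hgdef]
    rw [Real.sqrt_eq_rpow, div_eq_mul_inv, ← Real.rpow_neg h1y]
  have hmaj : ∀ r : ℝ, IntervalIntegrable (fun y => (1 - y) ^ (-(1/2) : ℝ)) volume r 1 := by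
    intro r
    have h := (intervalIntegrable_rpow' (a := 0) (b := 1 - r) (r := (-(1/2) : ℝ))
      (by norm_num)).comp_sub_left 1
    simpa using h.symm
  have hmajint : ∀ r : ℝ, r ≤ 1 →
      (∫ y in r..(1:ℝ), (1 - y) ^ (-(1/2) : ℝ)) = 2 * Real.sqrt (1 - r) := by
    intro r _
    have h := intervalIntegral.integral_comp_sub_left (a := r) (b := 1)
      (fun x => x ^ (-(1/2) : ℝ)) 1
    simp only [sub_self] at h
    rw [h, integral_rpow (Or.inl (by norm_num)), Real.sqrt_eq_rpow]
    norm_num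
    ring
  have hbound : ∀ y : ℝ, y ≤ 1 → ‖g y‖ ≤ R 0 * (1 - y) ^ (-(1/2) : ℝ) := by
    intro y hy
    have h1y : 0 ≤ 1 - y := by linarith
    rw [Real.norm_of_nonneg (div_nonneg (hRc_nonneg y) (Real.sqrt_nonneg _))]
    have h := mul_le_mul_of_nonneg_right (hRc_le y) (Real.rpow_nonneg h1y (-(1/2) : ℝ))
    rw [← hgrpow y hy] at h
    exact h
  have hint : ∀ r : ℝ, r ≤ 1 → IntervalIntegrable g volume r 1 := by
    intro r hr
    refine ((hmaj r).const_mul (R 0)).mono_fun' hg_meas.aestronglyMeasurable.restrict ?_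
    refine (ae_restrict_iff' measurableSet_uIoc).2 (ae_of_all _ ?_)
    intro y hy
    have hy1 : y ≤ 1 := by
      rcases Set.mem_uIoc.1 hy with h | h
      · exact h.2
      · exact h.2.trans hr
    exact hbound y hy1
  have hFeq : ∀ r ∈ Set.Icc (0:ℝ) 1,
      (∫ y in r..1, R y / Real.sqrt (1 - y)) = ∫ y in r..1, g y := by
    intro r hr
    refine intervalIntegral.integral_congr fun y hy => ?_
    rw [Set.uIcc_of_le hr.2] at hy
    have hy01 : y ∈ Set.Icc (0:ℝ) 1 := ⟨hr.1.trans hy.1, hy.2⟩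
    simp [hgdef, hRc_eq y hy01]
  set F : ℝ → ℝ := fun u => ∫ y in u..1, g y with hFdef
  set w : ℝ → ℝ := fun u => 1 / (2 * Real.sqrt (1 - u)) * F u with hwdef
  have hvw : ∀ r ∈ Set.Ico (0:ℝ) 1, v r = w r := by
    intro r hr
    rw [hv r hr, hFeq r ⟨hr.1, hr.2.le⟩]
  have hsqueeze : ∀ r ∈ Set.Ico (0:ℝ) 1, R 1 ≤ w r ∧ w r ≤ Rc r := by
    intro r hr
    have hspos : 0 < Real.sqrt (1 - r) := Real.sqrt_pos.2 (by linarith [hr.2])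
    have h2pos : (0:ℝ) < 2 * Real.sqrt (1 - r) := by positivity
    have hr01 : r ∈ Set.Icc (0:ℝ) 1 := ⟨hr.1, hr.2.le⟩
    have hlow : R 1 * (2 * Real.sqrt (1 - r)) ≤ F r := by
      have h1 : (∫ y in r..(1:ℝ), R 1 * (1 - y) ^ (-(1/2) : ℝ)) ≤ F r := by
        refine intervalIntegral.integral_mono_on hr.2.le ((hmaj r).const_mul _)
          (hint r hr.2.le) ?_
        intro y hy
        have h1y : 0 ≤ 1 - y := by linarith [hy.2]
        rw [hgrpow y hy.2]
        have hy01 : y ∈ Set.Icc (0:ℝ) 1 := ⟨hr.1.trans hy.1, hy.2⟩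
        have hR1 : R 1 ≤ Rc y := by
          rw [hRc_eq y hy01]; exact hmono hy01 (by norm_num) hy01.2
        exact mul_le_mul_of_nonneg_right hR1 (Real.rpow_nonneg h1y _)
      calc R 1 * (2 * Real.sqrt (1 - r))
          = ∫ y in r..(1:ℝ), R 1 * (1 - y) ^ (-(1/2) : ℝ) := by
            rw [intervalIntegral.integral_const_mul, hmajint r hr.2.le]
        _ ≤ F r := h1
    have hhigh : F r ≤ Rc r * (2 * Real.sqrt (1 - r)) := by
      have h1 : F r ≤ ∫ y in r..(1:ℝ), Rc r * (1 - y) ^ (-(1/2) : ℝ) := by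
        refine intervalIntegral.integral_mono_on hr.2.le (hint r hr.2.le)
          ((hmaj r).const_mul _) ?_
        intro y hy
        have h1y : 0 ≤ 1 - y := by linarith [hy.2]
        rw [hgrpow y hy.2]
        have hy01 : y ∈ Set.Icc (0:ℝ) 1 := ⟨hr.1.trans hy.1, hy.2⟩
        have hRyr : Rc y ≤ Rc r := by
          rw [hRc_eq y hy01, hRc_eq r hr01]; exact hmono hr01 hy01 hy.1
        exact mul_le_mul_of_nonneg_right hRyr (Real.rpow_nonneg h1y _)
      calc F r ≤ ∫ y in r..(1:ℝ), Rc r * (1 - y) ^ (-(1/2) : ℝ) := h1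
        _ = Rc r * (2 * Real.sqrt (1 - r)) := by
            rw [intervalIntegral.integral_const_mul, hmajint r hr.2.le]
    constructor
    · have := (le_div_iff₀ h2pos).2 hlow
      calc R 1 ≤ F r / (2 * Real.sqrt (1 - r)) := this
        _ = w r := by rw [hwdef]; ring
    · have := (div_le_iff₀ h2pos).2 hhigh
      calc w r = F r / (2 * Real.sqrt (1 - r)) := by rw [hwdef]; ring
        _ ≤ Rc r := this
  constructor
  · intro r hr
    have hr1 : r < 1 := hr.2
    have hspos : 0 < Real.sqrt (1 - r) := Real.sqrt_pos.2 (by linarith)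
    have hsne : Real.sqrt (1 - r) ≠ 0 := ne_of_gt hspos
    have h1rne : (1 : ℝ) - r ≠ 0 := by linarith
    have hgcont : ContinuousAt g r := by
      apply ContinuousAt.div hRc_cont.continuousAt
      · exact (Real.continuous_sqrt.comp (continuous_const.sub continuous_id)).continuousAt
      · exact hsne
    have hF : HasDerivAt F (-(g r)) r := by
      exact intervalIntegral.integral_hasDerivAt_left (hint r hr1.le)
        ⟨Set.univ, Filter.univ_mem, hg_meas.aestronglyMeasurable.restrict⟩ hgcont
    have hsq : HasDerivAt (fun u => Real.sqrt (1 - u)) (1 / (2 * Real.sqrt (1 - r)) * (-1)) r := by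
      have h1 : HasDerivAt (fun u : ℝ => 1 - u) (-1) r := (hasDerivAt_id r).const_sub 1
      exact (Real.hasDerivAt_sqrt h1rne).comp r h1
    have hinv : HasDerivAt (fun u => (2 * Real.sqrt (1 - u))⁻¹)
        (-(2 * (1 / (2 * Real.sqrt (1 - r)) * (-1))) / (2 * Real.sqrt (1 - r)) ^ 2) r :=
      (hsq.const_mul 2).inv (mul_ne_zero two_ne_zero hsne)
    have hw : HasDerivAt w
        (-(2 * (1 / (2 * Real.sqrt (1 - r)) * (-1))) / (2 * Real.sqrt (1 - r)) ^ 2 * F r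
          + (2 * Real.sqrt (1 - r))⁻¹ * (-(g r))) r := by
      have : HasDerivAt (fun u => (2 * Real.sqrt (1 - u))⁻¹ * F u) _ r := hinv.mul hF
      simpa [hwdef, one_div] using this
    refine ⟨_, hw.hasDerivWithinAt.congr (fun u hu => hvw u hu) (hvw r hr), ?_⟩
    have hgr : g r = R r / Real.sqrt (1 - r) := by
      simp [hgdef, hRc_eq r ⟨hr.1, hr1.le⟩]
    have hvr : v r = 1 / (2 * Real.sqrt (1 - r)) * F r := hvw r hr
    have hs2 : Real.sqrt (1 - r) * Real.sqrt (1 - r) = 1 - r :=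
      Real.mul_self_sqrt (by linarith)
    rw [hvr, hgr]
    obtain ⟨q, hq⟩ : ∃ q, Real.sqrt (1 - r) = q := ⟨_, rfl⟩
    rw [hq] at hspos hsne hs2 ⊢
    rw [← hs2]
    field_simp
    ring
  · have hRc1 : Rc 1 = R 1 := hRc_eq 1 (by norm_num)
    have hRcT : Tendsto Rc (nhdsWithin 1 (Set.Iio 1)) (nhds (R 1)) := by
      rw [← hRc1]
      exact (hRc_cont.tendsto 1).mono_left nhdsWithin_le_nhds
    have hmem : Set.Ioo (0:ℝ) 1 ∈ nhdsWithin (1:ℝ) (Set.Iio 1) :=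
      Ioo_mem_nhdsLT_of_mem (by norm_num : (1:ℝ) ∈ Set.Ioc (0:ℝ) 1)
    refine tendsto_of_tendsto_of_tendsto_of_le_of_le' tendsto_const_nhds hRcT ?_ ?_
    · filter_upwards [hmem] with r hr
      rw [hvw r ⟨hr.1.le, hr.2⟩]
      exact (hsqueeze r ⟨hr.1.le, hr.2⟩).1
    · filter_upwards [hmem] with r hr
      rw [hvw r ⟨hr.1.le, hr.2⟩]
      exact (hsqueeze r ⟨hr.1.le, hr.2⟩).2
end

section
/- Let B > 0, c > 0, q > 0, and set ρ(t) = 1 - (1 + (Bq²(1+q))/(c(1+2q)) · t)^{-1/q} for t ≥ 0. Then ρ solves ρ(t) = ∫₀ᵗ λ*(ρ(s))(1-ρ(s)) ds with λ*(r) = (Bq(1+q))/(c(1+2q)) (1-r)^q, and for every β ∈ (0,1), the first time ρ reaches β equals T_β = (c(1+2q))/(Bq²(1+q)) · ((1-β)^{-q} - 1). -/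
open Set MeasureTheory intervalIntegral Real

/-- Explicit equilibrium state process and quantiles for the power reward without cut-off:
`ρ(t) = 1 - (1 + (Bq²(1+q))/(c(1+2q)) t)^{-1/q}` solves the Kolmogorov equation with
`λ*(r) = (Bq(1+q))/(c(1+2q)) (1-r)^q`, and the first time `ρ` reaches `β` is
`T_β = (c(1+2q))/(Bq²(1+q)) ((1-β)^{-q} - 1)`. -/
theorem power_reward_state_process
    (B c q : ℝ) (hB : 0 < B) (hc : 0 < c) (hq : 0 < q)
    (lam : ℝ → ℝ)
    (hlam : ∀ r : ℝ, lam r = (B * q * (1 + q)) / (c * (1 + 2 * q)) * (1 - r) ^ q)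
    (ρ : ℝ → ℝ)
    (hρ : ∀ t : ℝ, ρ t = 1 - (1 + (B * q ^ 2 * (1 + q)) / (c * (1 + 2 * q)) * t) ^ (-1 / q)) :
    (∀ t ≥ (0:ℝ), ρ t = ∫ s in (0:ℝ)..t, lam (ρ s) * (1 - ρ s)) ∧
    (∀ β ∈ Set.Ioo (0:ℝ) 1,
      sInf {t : ℝ | 0 ≤ t ∧ β ≤ ρ t}
        = (c * (1 + 2 * q)) / (B * q ^ 2 * (1 + q)) * ((1 - β) ^ (-q) - 1)) := by
  set K : ℝ := (B * q ^ 2 * (1 + q)) / (c * (1 + 2 * q)) with hK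
  have hq2 : (0:ℝ) < 1 + 2 * q := by linarith
  have hq1 : (0:ℝ) < 1 + q := by linarith
  have hKpos : 0 < K := by rw [hK]; positivity
  have hC : (B * q * (1 + q)) / (c * (1 + 2 * q)) = K / q := by
    rw [hK]; field_simp
  -- the key derivative fact
  have hderiv : ∀ s : ℝ, 0 < 1 + K * s →
      HasDerivAt (fun u => 1 - (1 + K * u) ^ (-1 / q))
        (K / q * ((1 + K * s) ^ (-1 / q)) ^ q * ((1 + K * s) ^ (-1 / q))) s := by
    intro s hs
    have hinner : HasDerivAt (fun u : ℝ => 1 + K * u) K s := by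
      simpa using ((hasDerivAt_id s).const_mul K).const_add 1
    have houter := (Real.hasDerivAt_rpow_const (p := -1 / q)
      (Or.inl hs.ne')).comp s hinner
    have hfin := houter.const_sub 1
    refine hfin.congr_deriv (Eq.symm ?_)
    have h1 : ((1 + K * s) ^ (-1 / q)) ^ q = (1 + K * s) ^ (-1 : ℝ) := by
      rw [← Real.rpow_mul hs.le]
      congr 1
      field_simp
    have h2 : (1 + K * s) ^ (-1 : ℝ) * (1 + K * s) ^ (-1 / q)
        = (1 + K * s) ^ (-1 / q - 1) := by
      rw [← Real.rpow_add hs]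
      congr 1
      ring
    rw [h1, mul_assoc, h2]
    ring
  constructor
  · -- Kolmogorov equation
    intro t ht
    have hpos : ∀ s ∈ Set.uIcc (0:ℝ) t, 0 < 1 + K * s := by
      intro s hs
      rw [Set.uIcc_of_le ht] at hs
      nlinarith [hs.1, hKpos]
    have hycont : ContinuousOn (fun s : ℝ => (1 + K * s) ^ (-1 / q)) (Set.uIcc 0 t) := by
      apply ContinuousOn.rpow_const
      · fun_prop
      · exact fun s hs => Or.inl (hpos s hs).ne'
    have hcont : ContinuousOn
        (fun s => K / q * ((1 + K * s) ^ (-1 / q)) ^ q * ((1 + K * s) ^ (-1 / q)))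
        (Set.uIcc 0 t) :=
      (continuousOn_const.mul (hycont.rpow_const fun s _ => Or.inr hq.le)).mul hycont
    have key := intervalIntegral.integral_eq_sub_of_hasDerivAt
      (f := fun u => 1 - (1 + K * u) ^ (-1 / q))
      (fun s hs => hderiv s (hpos s hs)) hcont.intervalIntegrable
    simp only [hlam, hρ, sub_sub_cancel, hC]
    rw [key]
    simp [Real.one_rpow]
  · -- quantile times
    intro β hβ
    obtain ⟨hβ0, hβ1⟩ := hβ
    have h1β : 0 < 1 - β := by linarith
    set T : ℝ := (c * (1 + 2 * q)) / (B * q ^ 2 * (1 + q)) * ((1 - β) ^ (-q) - 1) with hT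
    have hKT : 1 + K * T = (1 - β) ^ (-q) := by
      rw [hT, hK]
      field_simp
      ring
    have hb1 : 1 ≤ (1 - β) ^ (-q) :=
      Real.one_le_rpow_of_pos_of_le_one_of_nonpos h1β (by linarith) (by linarith)
    have hT0 : 0 ≤ T := by
      have h : 0 ≤ K * T := by linarith
      nlinarith
    have hρT : ρ T = β := by
      rw [hρ, hKT, ← Real.rpow_mul h1β.le]
      have h1 : -q * (-1 / q) = 1 := by field_simp
      rw [h1, Real.rpow_one]
      ring
    have hset : {t : ℝ | 0 ≤ t ∧ β ≤ ρ t} = Set.Ici T := by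
      ext t
      simp only [Set.mem_setOf_eq, Set.mem_Ici]
      constructor
      · rintro ⟨ht0, hβt⟩
        by_contra hcon
        push_neg at hcon
        have h1 : (0:ℝ) < 1 + K * t := by nlinarith
        have h2 : 1 + K * t < 1 + K * T := by nlinarith
        have h3 : (1 + K * T) ^ (-1 / q) < (1 + K * t) ^ (-1 / q) :=
          Real.rpow_lt_rpow_of_neg h1 h2 (div_neg_of_neg_of_pos (by norm_num) hq)
        rw [hρ t] at hβt
        rw [hρ T] at hρT
        linarith
      · intro hTt
        refine ⟨le_trans hT0 hTt, ?_⟩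
        have h1 : (0:ℝ) < 1 + K * T := by nlinarith
        have h2 : 1 + K * T ≤ 1 + K * t := by nlinarith
        have h3 : (1 + K * t) ^ (-1 / q) ≤ (1 + K * T) ^ (-1 / q) := by
          rcases eq_or_lt_of_le h2 with h | h
          · rw [h]
          · exact (Real.rpow_lt_rpow_of_neg h1 h (div_neg_of_neg_of_pos (by norm_num) hq)).le
        rw [hρ t]
        rw [hρ T] at hρT
        linarith
    rw [hset, csInf_Ici]
end

section
/- Let B > 0, c > 0, α ∈ (0,1), and λ*(r) = 𝟙_{r ≤ α} (B/(2cα)) √((1-α)/(1-r)). Define ρ(t) = 1 - (1 - (B√(1-α))/(4cα) · t)² for 0 ≤ t ≤ T_α and ρ(t) = α for t > T_α, where T_α = 4cα(1 - √(1-α))/(B√(1-α)). Then ρ is continuous, ρ(T_α) = α, and ρ satisfies ρ'(t) = λ*(ρ(t))(1-ρ(t)) for all t ∈ (0, T_α). -/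
open Set MeasureTheory intervalIntegral Real

/-- Explicit equilibrium state process under the uniform reward with cut-off `α`:
with `λ*(r) = 𝟙_{r≤α} (B/(2cα))√((1-α)/(1-r))` and `T_α = 4cα(1-√(1-α))/(B√(1-α))`,
the function `ρ(t) = 1 - (1 - (B√(1-α))/(4cα) t)²` for `t ≤ T_α`, `ρ(t) = α` for `t > T_α`,
is continuous, satisfies `ρ(T_α) = α`, and solves `ρ' = λ*(ρ)(1-ρ)` on `(0, T_α)`. -/
theorem uniform_reward_cutoff_state_process
    (B c α : ℝ) (hB : 0 < B) (hc : 0 < c) (hα : α ∈ Set.Ioo (0:ℝ) 1)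
    (lam : ℝ → ℝ)
    (hlam : ∀ r : ℝ, lam r =
      if r ≤ α then B / (2 * c * α) * Real.sqrt ((1 - α) / (1 - r)) else 0)
    (Tα : ℝ) (hT : Tα = 4 * c * α * (1 - Real.sqrt (1 - α)) / (B * Real.sqrt (1 - α)))
    (ρ : ℝ → ℝ)
    (hρ : ∀ t : ℝ, ρ t =
      if t ≤ Tα then 1 - (1 - B * Real.sqrt (1 - α) / (4 * c * α) * t) ^ 2 else α) :
    Continuous ρ ∧ ρ Tα = α ∧
      ∀ t ∈ Set.Ioo 0 Tα, HasDerivAt ρ (lam (ρ t) * (1 - ρ t)) t := by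
  obtain ⟨hα0, hα1⟩ := hα
  set s := Real.sqrt (1 - α) with hs
  have hs0 : 0 < s := Real.sqrt_pos.2 (by linarith)
  have hssq : s ^ 2 = 1 - α := by
    rw [hs, sq, Real.mul_self_sqrt (by linarith)]
  have hs1 : s < 1 := by nlinarith
  set k := B * s / (4 * c * α) with hkdef
  have hk : 0 < k := by positivity
  have hkT : k * Tα = 1 - s := by
    rw [hT, hkdef]
    field_simp
  have hT0 : 0 < Tα := by
    nlinarith
  set f : ℝ → ℝ := fun t => 1 - (1 - k * t) ^ 2 with hfdef
  have hρf : ∀ t : ℝ, t ≤ Tα → ρ t = f t := by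
    intro t ht
    rw [hρ t, if_pos ht]
  have hfT : f Tα = α := by
    simp only [hfdef, hkT]
    nlinarith
  have hρeq : ρ = fun t => if t ≤ Tα then f t else α := by
    funext t
    rw [hρ t]
  constructor
  · rw [hρeq]
    exact Continuous.if_le (by fun_prop) continuous_const continuous_id
      continuous_const (fun x hx => by rw [hx, hfT])
  constructor
  · rw [hρf Tα le_rfl, hfT]
  · intro t ht
    obtain ⟨ht0, htT⟩ := ht
    have hkt : 0 < k * t := by positivity
    have hktT : k * t < 1 - s := by
      rw [← hkT]
      exact (mul_lt_mul_iff_right₀ hk).2 htT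
    have h1kt : s < 1 - k * t := by linarith
    have h1kt0 : 0 < 1 - k * t := by linarith
    have hft : f t = 1 - (1 - k * t) ^ 2 := rfl
    have hρt : ρ t = f t := hρf t htT.le
    have hftle : f t ≤ α := by
      have : s ^ 2 ≤ (1 - k * t) ^ 2 := pow_le_pow_left₀ hs0.le h1kt.le 2
      rw [hft]; nlinarith
    -- derivative of f
    have hf' : HasDerivAt f (2 * k * (1 - k * t)) t := by
      have h1 : HasDerivAt (fun x : ℝ => 1 - k * x) (-k) t := by
        simpa using ((hasDerivAt_id t).const_mul k).const_sub 1
      have h2 : HasDerivAt (fun x : ℝ => 1 - (1 - k * x) ^ 2)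
          (-(((2:ℕ):ℝ) * (1 - k * t) ^ (2 - 1) * -k)) t := (h1.pow 2).const_sub 1
      convert h2 using 1
      ring
    have heq : ρ =ᶠ[nhds t] f := by
      filter_upwards [IsOpen.mem_nhds isOpen_Iio htT] with x hx
      exact hρf x (le_of_lt hx)
    have hρ' : HasDerivAt ρ (2 * k * (1 - k * t)) t :=
      hf'.congr_of_eventuallyEq heq
    -- compute lam (ρ t) * (1 - ρ t)
    have hlamval : lam (ρ t) * (1 - ρ t) = 2 * k * (1 - k * t) := by
      rw [hρt, hlam (f t), if_pos hftle, hft]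
      have h1mf : (1 : ℝ) - (1 - (1 - k * t) ^ 2) = (1 - k * t) ^ 2 := by ring
      have hsqrt : Real.sqrt ((1 - α) / (1 - (1 - (1 - k * t) ^ 2))) = s / (1 - k * t) := by
        rw [h1mf, Real.sqrt_div (by linarith : (0:ℝ) ≤ 1 - α), Real.sqrt_sq h1kt0.le, ← hs]
      rw [hsqrt, h1mf]
      have h2 : s / (1 - k * t) * (1 - k * t) = s := div_mul_cancel₀ s h1kt0.ne'
      calc B / (2 * c * α) * (s / (1 - k * t)) * (1 - k * t) ^ 2
          = B / (2 * c * α) * (s / (1 - k * t) * (1 - k * t)) * (1 - k * t) := by ring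
        _ = B / (2 * c * α) * s * (1 - k * t) := by rw [h2]
        _ = 2 * k * (1 - k * t) := by rw [hkdef]; field_simp; ring
    rw [hlamval]
    exact hρ'
end

section
/- For every x ∈ [0,1]: 0 ≤ √x − 2x/(1+x) ≤ (1/2)(1−x)² (1/(4x^{3/2}) + 4/(1+x)³), where for x = 0 the right-hand side is interpreted as +∞. -/
open Real

/-- Taylor-type inequality: for `x ∈ [0,1]`,
`0 ≤ √x - 2x/(1+x) ≤ (1/2)(1-x)² (1/(4x^{3/2}) + 4/(1+x)³)`.
(For `x = 0` the term `1/(4x^{3/2})` is `1/0 = 0` under Lean's convention; the claim holds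
there as well, consistent with the `+∞` interpretation.) -/
theorem sqrt_sub_harmonic_taylor_bound :
    ∀ x ∈ Set.Icc (0:ℝ) 1,
      0 ≤ Real.sqrt x - 2 * x / (1 + x) ∧
      Real.sqrt x - 2 * x / (1 + x)
        ≤ (1 / 2) * (1 - x) ^ 2 * (1 / (4 * (x * Real.sqrt x)) + 4 / (1 + x) ^ 3) := by
  intro x hx
  obtain ⟨hx0, hx1⟩ := hx
  set s := Real.sqrt x with hsdef
  have hs0 : 0 ≤ s := Real.sqrt_nonneg x
  have hs2 : s ^ 2 = x := Real.sq_sqrt hx0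
  have hs1 : s ≤ 1 := by nlinarith
  have h1x : (0:ℝ) < 1 + x := by linarith
  have h3 : (0:ℝ) < (1 + x) ^ 3 := by positivity
  constructor
  · rw [sub_nonneg, div_le_iff₀ h1x]
    nlinarith [sq_nonneg (1 - s), mul_nonneg hs0 (sq_nonneg (1 - s))]
  · have key : (s - 2 * x / (1 + x)) * (1 + x) ^ 3 ≤ 2 * (1 - x) ^ 2 := by
      have heq : (s - 2 * x / (1 + x)) * (1 + x) ^ 3
          = s * (1 + x) ^ 3 - 2 * x * (1 + x) ^ 2 := by
        field_simp
      rw [heq, ← hs2]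
      have h4 : s ^ 4 ≤ 1 := by nlinarith
      have hA : 0 ≤ (1 - s) ^ 2 * (s * (1 - s ^ 4)) :=
        mul_nonneg (sq_nonneg _) (mul_nonneg hs0 (by linarith))
      have hB : 0 ≤ (1 - s) ^ 2 * (s * (1 - s ^ 2)) :=
        mul_nonneg (sq_nonneg _) (mul_nonneg hs0 (by nlinarith))
      nlinarith [sq_nonneg (1 - s), mul_nonneg (sq_nonneg (1 - s)) (sq_nonneg s), hA, hB]
    have hstep : s - 2 * x / (1 + x) ≤ 2 * (1 - x) ^ 2 / (1 + x) ^ 3 :=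
      (le_div_iff₀ h3).mpr key
    have hterm : 0 ≤ (1 / 2) * (1 - x) ^ 2 * (1 / (4 * (x * s))) := by positivity
    have hring : (1 / 2) * (1 - x) ^ 2 * (1 / (4 * (x * s)) + 4 / (1 + x) ^ 3)
        = (1 / 2) * (1 - x) ^ 2 * (1 / (4 * (x * s))) + 2 * (1 - x) ^ 2 / (1 + x) ^ 3 := by
      ring
    rw [hring]
    linarith
end

section
/- Let f: [0,α] → ℝ be continuous, and define R(r) = f(r)/√(1-r) + ∫_r^α f(s)/(2(1-s)^{3/2}) ds for r ∈ [0,α], with α < 1. Then f(r) = R(r)√(1-r) − ∫_r^α R(s)/(2√(1-s)) ds for all r ∈ [0,α]; i.e., the two transformations are mutually inverse. -/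
open intervalIntegral Real

/-- The reparametrizations `f ↦ R` and `R ↦ f` of the principal's problem are mutually
inverse: if `R(r) = f(r)/√(1-r) + ∫_r^α f(s)/(2(1-s)^{3/2}) ds`, then
`f(r) = R(r)√(1-r) - ∫_r^α R(s)/(2√(1-s)) ds` on `[0,α]`. -/
theorem reparametrization_inverse
    (α : ℝ) (hα : α ∈ Set.Ioo (0:ℝ) 1)
    (f : ℝ → ℝ) (hf : ContinuousOn f (Set.Icc 0 α))
    (R : ℝ → ℝ)
    (hR : ∀ r ∈ Set.Icc (0:ℝ) α,
      R r = f r / Real.sqrt (1 - r)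
            + ∫ s in r..α, f s / (2 * (1 - s) * Real.sqrt (1 - s))) :
    ∀ r ∈ Set.Icc (0:ℝ) α,
      f r = R r * Real.sqrt (1 - r) - ∫ s in r..α, R s / (2 * Real.sqrt (1 - s)) := by
  obtain ⟨hα0, hα1⟩ := hα
  -- continuous extension of f to all of ℝ
  set g : ℝ → ℝ := fun x => f ((Set.projIcc 0 α hα0.le x : Set.Icc (0:ℝ) α) : ℝ) with hgdef
  have hg : Continuous g := by
    apply hf.comp_continuous (continuous_subtype_val.comp continuous_projIcc)
    intro x; exact (Set.projIcc 0 α hα0.le x).2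
  have hgf : ∀ x ∈ Set.Icc (0:ℝ) α, g x = f x := by
    intro x hx; simp [hgdef, Set.projIcc_of_mem hα0.le hx]
  set h : ℝ → ℝ := fun s => g s / (2 * (1 - s) * Real.sqrt (1 - s)) with hhdef
  have hconth : ContinuousOn h (Set.Iio (1:ℝ)) := by
    apply hg.continuousOn.div (by fun_prop)
    intro x hx
    have hx1 : (0:ℝ) < 1 - x := by simp only [Set.mem_Iio] at hx; linarith
    positivity
  have hsub : ∀ x ∈ Set.Icc (0:ℝ) α, Set.uIcc x α ⊆ Set.Iio (1:ℝ) := by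
    intro x hx s hs
    rw [Set.uIcc_of_le hx.2] at hs
    exact lt_of_le_of_lt hs.2 hα1
  have hInt : ∀ x ∈ Set.Icc (0:ℝ) α, IntervalIntegrable h MeasureTheory.volume x α :=
    fun x hx => (hconth.mono (hsub x hx)).intervalIntegrable
  set F : ℝ → ℝ := fun r => ∫ s in r..α, h s with hFdef
  have hF' : ∀ x ∈ Set.Icc (0:ℝ) α, HasDerivAt F (-(h x)) x := by
    intro x hx
    have hx1 : x < 1 := lt_of_le_of_lt hx.2 hα1
    exact intervalIntegral.integral_hasDerivAt_left (hInt x hx)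
      (ContinuousOn.stronglyMeasurableAtFilter isOpen_Iio hconth x hx1)
      (hconth.continuousAt (Iio_mem_nhds hx1))
  have hFf : ∀ x ∈ Set.Icc (0:ℝ) α,
      F x = ∫ s in x..α, f s / (2 * (1 - s) * Real.sqrt (1 - s)) := by
    intro x hx
    apply intervalIntegral.integral_congr
    intro s hs
    have hs' : s ∈ Set.Icc (0:ℝ) α := by
      rw [Set.uIcc_of_le hx.2] at hs
      exact ⟨le_trans hx.1 hs.1, hs.2⟩
    simp only [hhdef, hgf s hs']
  have hRF : ∀ x ∈ Set.Icc (0:ℝ) α, R x = f x / Real.sqrt (1 - x) + F x := by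
    intro x hx; rw [hR x hx, hFf x hx]
  -- G = √(1-s) * F s and its derivative
  set G : ℝ → ℝ := fun s => Real.sqrt (1 - s) * F s with hGdef
  have hG' : ∀ x ∈ Set.Icc (0:ℝ) α,
      HasDerivAt G (-(R x / (2 * Real.sqrt (1 - x)))) x := by
    intro x hx
    have hx1 : (0:ℝ) < 1 - x := by
      have := lt_of_le_of_lt hx.2 hα1; linarith
    have hsq : HasDerivAt (fun s : ℝ => Real.sqrt (1 - s))
        (1 / (2 * Real.sqrt (1 - x)) * (-1)) x :=
      (Real.hasDerivAt_sqrt hx1.ne').comp x ((hasDerivAt_id x).const_sub 1)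
    have hprod := hsq.mul (hF' x hx)
    convert hprod using 1
    · rfl
    · rfl
    · rfl
    have hs0 : (0:ℝ) < Real.sqrt (1 - x) := Real.sqrt_pos.mpr hx1
    have hs2 : Real.sqrt (1 - x) * Real.sqrt (1 - x) = 1 - x :=
      Real.mul_self_sqrt hx1.le
    rw [hRF x hx]
    simp only [hhdef, hgf x hx]
    set u := Real.sqrt (1 - x) with hu
    rw [← hs2]
    have hu0 : u ≠ 0 := hs0.ne'
    field_simp
    ring
  intro r hr
  have hruIcc : Set.uIcc r α ⊆ Set.Icc (0:ℝ) α := by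
    rw [Set.uIcc_of_le hr.2]
    exact Set.Icc_subset_Icc hr.1 le_rfl
  -- continuity of R on [0, α]
  have hFc : ContinuousOn F (Set.Icc (0:ℝ) α) :=
    fun x hx => (hF' x hx).continuousAt.continuousWithinAt
  have hRc : ContinuousOn R (Set.Icc (0:ℝ) α) := by
    apply ContinuousOn.congr (f := fun x => f x / Real.sqrt (1 - x) + F x)
    · apply ContinuousOn.add _ hFc
      apply hf.div (by fun_prop)
      intro x hx
      have : (0:ℝ) < 1 - x := by have := lt_of_le_of_lt hx.2 hα1; linarith
      positivity
    · exact hRF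
  have hintR : IntervalIntegrable (fun s => -(R s / (2 * Real.sqrt (1 - s))))
      MeasureTheory.volume r α := by
    apply ContinuousOn.intervalIntegrable
    apply ContinuousOn.neg
    apply ContinuousOn.div (hRc.mono hruIcc) (by fun_prop)
    intro x hx
    have hx' := hruIcc hx
    have : (0:ℝ) < 1 - x := by have := lt_of_le_of_lt hx'.2 hα1; linarith
    positivity
  have key := intervalIntegral.integral_eq_sub_of_hasDerivAt
    (fun x hx => hG' x (hruIcc hx)) hintR
  rw [intervalIntegral.integral_neg] at key
  have hFα : F α = 0 := intervalIntegral.integral_same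
  have hGα : G α = 0 := by simp [hGdef, hFα]
  have hkey : (∫ s in r..α, R s / (2 * Real.sqrt (1 - s))) = G r := by
    rw [hGα] at key; linarith
  rw [hkey, hRF r hr]
  have hr1 : (0:ℝ) < 1 - r := by have := lt_of_le_of_lt hr.2 hα1; linarith
  have hs0 : Real.sqrt (1 - r) ≠ 0 := (Real.sqrt_pos.mpr hr1).ne'
  simp only [hGdef]
  field_simp
  ring
end

section
/- Suppose c: [0,α] → (0,∞) is continuous and r ↦ c(r)(1-r)/(2-r) is decreasing on [0,α], α < 1, B > 0, C = (1/2)∫₀^α √(c(r)(2-r))/(1-r) dr. Then R*(r) := (B/C){√(c(r)/(2-r)) + (1/2)∫_r^α (1/(1-s))√(c(s)/(2-s)) ds} is nonnegative and decreasing on [0,α], and R*(α) = (B/C)√(c(α)/(2-α)) > 0. -/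
open intervalIntegral Real

/-- Under the assumption that `r ↦ c(r)(1-r)/(2-r)` is decreasing, the optimal reward scheme
`R*(r) = (B/C){√(c(r)/(2-r)) + (1/2)∫_r^α (1/(1-s))√(c(s)/(2-s)) ds}` is nonnegative and
decreasing on `[0,α]`, with `R*(α) = (B/C)√(c(α)/(2-α)) > 0`. -/
theorem optimal_reward_scheme_properties
    (α B : ℝ) (hα : α ∈ Set.Ioo (0:ℝ) 1) (hB : 0 < B)
    (c : ℝ → ℝ) (hc : ContinuousOn c (Set.Icc 0 α)) (hcpos : ∀ r ∈ Set.Icc (0:ℝ) α, 0 < c r)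
    (hcmono : AntitoneOn (fun r => c r * (1 - r) / (2 - r)) (Set.Icc 0 α))
    (C : ℝ) (hC : C = (1 / 2) * ∫ r in (0:ℝ)..α, Real.sqrt (c r * (2 - r)) / (1 - r))
    (Rstar : ℝ → ℝ)
    (hRstar : ∀ r ∈ Set.Icc (0:ℝ) α,
      Rstar r = (B / C) * (Real.sqrt (c r / (2 - r))
        + (1 / 2) * ∫ s in r..α, (1 / (1 - s)) * Real.sqrt (c s / (2 - s)))) :
    (∀ r ∈ Set.Icc (0:ℝ) α, 0 ≤ Rstar r) ∧
    AntitoneOn Rstar (Set.Icc 0 α) ∧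
    Rstar α = (B / C) * Real.sqrt (c α / (2 - α)) ∧ 0 < Rstar α := by
  obtain ⟨hα0, hα1⟩ := hα
  have h1s : ∀ s ∈ Set.Icc (0:ℝ) α, 0 < 1 - s := fun s hs => by
    have := hs.2; linarith
  have h2s : ∀ s ∈ Set.Icc (0:ℝ) α, 0 < 2 - s := fun s hs => by
    have := hs.2; linarith
  have hαmem : α ∈ Set.Icc (0:ℝ) α := Set.right_mem_Icc.mpr hα0.le
  -- C is positive
  have hCpos : 0 < C := by
    rw [hC]
    have hGc : ContinuousOn (fun r => Real.sqrt (c r * (2 - r)) / (1 - r)) (Set.Icc 0 α) :=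
      ((hc.mul (continuous_const.sub continuous_id).continuousOn).sqrt).div
        (continuous_const.sub continuous_id).continuousOn (fun s hs => (h1s s hs).ne')
    have hGi : IntervalIntegrable (fun r => Real.sqrt (c r * (2 - r)) / (1 - r))
        MeasureTheory.volume 0 α := by
      apply ContinuousOn.intervalIntegrable
      rwa [Set.uIcc_of_le hα0.le]
    have hpos : 0 < ∫ r in (0:ℝ)..α, Real.sqrt (c r * (2 - r)) / (1 - r) := by
      refine intervalIntegral_pos_of_pos_on hGi (fun x hx => ?_) hα0
      have hx' : x ∈ Set.Icc (0:ℝ) α := ⟨hx.1.le, hx.2.le⟩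
      exact div_pos (Real.sqrt_pos.mpr (mul_pos (hcpos x hx') (h2s x hx'))) (h1s x hx')
    linarith
  have hBC : 0 < B / C := div_pos hB hCpos
  set g : ℝ → ℝ := fun s => (1 / (1 - s)) * Real.sqrt (c s / (2 - s)) with hgdef
  have hgc : ContinuousOn g (Set.Icc 0 α) :=
    (continuousOn_const.div (continuous_const.sub continuous_id).continuousOn
      (fun s hs => (h1s s hs).ne')).mul
      ((hc.div (continuous_const.sub continuous_id).continuousOn
        (fun s hs => (h2s s hs).ne')).sqrt)
  have hgnonneg : ∀ s ∈ Set.Icc (0:ℝ) α, 0 ≤ g s := by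
    intro s hs
    have h1 := h1s s hs
    exact mul_nonneg (by positivity) (Real.sqrt_nonneg _)
  have hgint : ∀ a b, a ∈ Set.Icc (0:ℝ) α → b ∈ Set.Icc (0:ℝ) α →
      IntervalIntegrable g MeasureTheory.volume a b := by
    intro a b ha hb
    apply (hgc.mono ?_).intervalIntegrable
    exact Set.uIcc_subset_Icc ha hb
  -- nonnegativity
  have hnonneg : ∀ r ∈ Set.Icc (0:ℝ) α, 0 ≤ Rstar r := by
    intro r hr
    rw [hRstar r hr]
    have hint : 0 ≤ ∫ s in r..α, g s :=
      intervalIntegral.integral_nonneg hr.2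
        (fun u hu => hgnonneg u ⟨le_trans hr.1 hu.1, hu.2⟩)
    have := Real.sqrt_nonneg (c r / (2 - r))
    positivity
  -- the key pointwise identity: √(c s/(2-s)) = √(h s)/√(1-s)
  have hkey : ∀ s ∈ Set.Icc (0:ℝ) α,
      Real.sqrt (c s / (2 - s)) = Real.sqrt (c s * (1 - s) / (2 - s)) / Real.sqrt (1 - s) := by
    intro s hs
    have h1 := h1s s hs
    have h2 := h2s s hs
    have hcs := hcpos s hs
    rw [← Real.sqrt_div (by positivity) (1 - s)]
    congr 1
    field_simp
  -- antitone
  have hanti : AntitoneOn Rstar (Set.Icc 0 α) := by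
    intro a ha b hb hab
    rw [hRstar a ha, hRstar b hb]
    have hbmem : ∀ s ∈ Set.Icc a b, s ∈ Set.Icc (0:ℝ) α :=
      fun s hs => ⟨le_trans ha.1 hs.1, le_trans hs.2 hb.2⟩
    have hsplit : (∫ s in a..α, g s) = (∫ s in a..b, g s) + ∫ s in b..α, g s :=
      (intervalIntegral.integral_add_adjacent_intervals (hgint a b ha hb)
        (hgint b α hb hαmem)).symm
    -- main inequality : f b - f a ≤ (1/2) ∫_a^b g
    have hmain : Real.sqrt (c b / (2 - b)) - Real.sqrt (c a / (2 - a))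
        ≤ (1 / 2) * ∫ s in a..b, g s := by
      set H := Real.sqrt (c b * (1 - b) / (2 - b)) with hHdef
      have hHnonneg : 0 ≤ H := Real.sqrt_nonneg _
      have h1a := h1s a ha
      have h1b := h1s b hb
      -- lower bound the integral
      have hψderiv : ∀ s ∈ Set.uIcc a b,
          HasDerivAt (fun s : ℝ => 2 / Real.sqrt (1 - s))
            (1 / ((1 - s) * Real.sqrt (1 - s))) s := by
        intro s hs
        have hs' := hbmem s (by rwa [Set.uIcc_of_le hab] at hs)
        have h1 := h1s s hs'
        have hsq : Real.sqrt (1 - s) ≠ 0 := (Real.sqrt_pos.mpr h1).ne'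
        have hu : HasDerivAt (fun x : ℝ => 1 - x) (-1) s := (hasDerivAt_id s).const_sub 1
        have hsqrt : HasDerivAt (fun x : ℝ => Real.sqrt (1 - x))
            (1 / (2 * Real.sqrt (1 - s)) * (-1)) s :=
          (Real.hasDerivAt_sqrt h1.ne').comp s hu
        have hinv := hsqrt.inv hsq
        have h2 := hinv.const_mul (2:ℝ)
        have heq : (fun s : ℝ => 2 / Real.sqrt (1 - s))
            = fun y => 2 * (Real.sqrt (1 - y))⁻¹ := by
          funext x; rw [div_eq_mul_inv]
        rw [heq]
        refine h2.congr_deriv ?_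
        rw [Real.sq_sqrt h1.le]
        field_simp
      have hψint : IntervalIntegrable (fun s => 1 / ((1 - s) * Real.sqrt (1 - s)))
          MeasureTheory.volume a b := by
        apply ContinuousOn.intervalIntegrable
        apply ContinuousOn.mono ?_ (Set.uIcc_subset_Icc ha hb)
        exact continuousOn_const.div
          (((continuous_const.sub continuous_id).continuousOn).mul
            ((continuous_const.sub continuous_id).continuousOn).sqrt)
          (fun s hs => by
            have h1 := h1s s hs
            positivity)
      have hFTC : (∫ s in a..b, 1 / ((1 - s) * Real.sqrt (1 - s)))
          = 2 / Real.sqrt (1 - b) - 2 / Real.sqrt (1 - a) :=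
        intervalIntegral.integral_eq_sub_of_hasDerivAt hψderiv hψint
      have hlow : H * (2 / Real.sqrt (1 - b) - 2 / Real.sqrt (1 - a))
          ≤ ∫ s in a..b, g s := by
        rw [← hFTC, ← intervalIntegral.integral_const_mul]
        refine intervalIntegral.integral_mono_on hab (hψint.const_mul H)
          (hgint a b ha hb) (fun s hs => ?_)
        have hs' := hbmem s hs
        have h1 := h1s s hs'
        have hsq : 0 < Real.sqrt (1 - s) := Real.sqrt_pos.mpr h1
        have hgs : g s = Real.sqrt (c s * (1 - s) / (2 - s)) / ((1 - s) * Real.sqrt (1 - s)) := by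
          show (1 / (1 - s)) * Real.sqrt (c s / (2 - s)) = _
          rw [hkey s hs']
          field_simp
        rw [hgs]
        have hH : H ≤ Real.sqrt (c s * (1 - s) / (2 - s)) :=
          Real.sqrt_le_sqrt (hcmono hs' hb hs.2)
        rw [mul_one_div, div_le_div_iff_of_pos_right (by positivity)]
        exact hH
      -- bound f b - f a
      have hfa : H / Real.sqrt (1 - a) ≤ Real.sqrt (c a / (2 - a)) := by
        rw [hkey a ha]
        gcongr
        exact Real.sqrt_le_sqrt (hcmono ha hb hab)
      have hfb : Real.sqrt (c b / (2 - b)) = H / Real.sqrt (1 - b) := hkey b hb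
      have : Real.sqrt (c b / (2 - b)) - Real.sqrt (c a / (2 - a))
          ≤ H / Real.sqrt (1 - b) - H / Real.sqrt (1 - a) := by
        rw [hfb]; linarith
      refine le_trans this ?_
      have : H / Real.sqrt (1 - b) - H / Real.sqrt (1 - a)
          = (1 / 2) * (H * (2 / Real.sqrt (1 - b) - 2 / Real.sqrt (1 - a))) := by ring
      rw [this]
      linarith
    have : Real.sqrt (c b / (2 - b)) + (1 / 2) * ∫ s in b..α, g s
        ≤ Real.sqrt (c a / (2 - a)) + (1 / 2) * ∫ s in a..α, g s := by
      rw [hsplit]; linarith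
    exact mul_le_mul_of_nonneg_left this hBC.le
  -- value at α
  have hval : Rstar α = (B / C) * Real.sqrt (c α / (2 - α)) := by
    rw [hRstar α hαmem, intervalIntegral.integral_same]
    ring
  refine ⟨hnonneg, hanti, hval, ?_⟩
  rw [hval]
  exact mul_pos hBC (Real.sqrt_pos.mpr (div_pos (hcpos α hαmem) (h2s α hαmem)))
end

section
/- Let N ≥ 2, c > 0 constant, n₀ ∈ {1,…,N-1}, K > 0. Define E(N) = (1/(NK)) (∑_{n=0}^{n₀-1} √( (c/(1-n/N)) (1 + 1/(1-(n+1)/N)) ))². Then N ↦ E(N) is strictly decreasing on {n₀+1, n₀+2, …} and E(N) → 0 as N → ∞. -/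
open Finset Filter Real

/-- Size effect for the N-player principal's problem with fixed total budget `K` and fixed
head count `n₀`: the minimal expected completion time
`E(N) = (1/(NK)) (∑_{n=0}^{n₀-1} √((c/(1-n/N))(1 + 1/(1-(n+1)/N))))²`
is strictly decreasing in `N` on `{n₀+1, n₀+2, …}` and tends to `0` as `N → ∞`. -/
theorem size_effect_fixed_head_count
    (c K : ℝ) (hc : 0 < c) (hK : 0 < K)
    (n₀ : ℕ) (hn₀ : 1 ≤ n₀)
    (E : ℕ → ℝ)
    (hE : ∀ N : ℕ, E N = (1 / ((N : ℝ) * K)) *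
      (∑ n ∈ Finset.range n₀,
        Real.sqrt ((c / (1 - (n : ℝ) / N)) * (1 + 1 / (1 - ((n : ℝ) + 1) / N)))) ^ 2) :
    (∀ M N : ℕ, n₀ + 1 ≤ M → M < N → E N < E M) ∧
    Tendsto E atTop (nhds 0) := by
  set f : ℕ → ℕ → ℝ := fun N n =>
    Real.sqrt ((c / (1 - (n : ℝ) / N)) * (1 + 1 / (1 - ((n : ℝ) + 1) / N))) with hf
  have hS_nonneg : ∀ N : ℕ, 0 ≤ ∑ n ∈ Finset.range n₀, f N n :=
    fun N => Finset.sum_nonneg fun n _ => Real.sqrt_nonneg _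
  -- positivity of denominators
  have hden : ∀ N : ℕ, n₀ + 1 ≤ N → ∀ n ∈ Finset.range n₀,
      0 < 1 - (n : ℝ) / N ∧ 0 < 1 - ((n : ℝ) + 1) / N := by
    intro N hN n hn
    have hn' : n < n₀ := Finset.mem_range.mp hn
    have hN0 : (0 : ℝ) < N := by
      have : 0 < N := by omega
      exact_mod_cast this
    constructor
    · have h1 : (n : ℝ) < N := by exact_mod_cast (by omega : n < N)
      have := (div_lt_one hN0).mpr h1
      linarith
    · have h1 : (n : ℝ) + 1 < N := by
        have : n + 1 < N := by omega
        exact_mod_cast this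
      have := (div_lt_one hN0).mpr h1
      linarith
  -- monotonicity of each term
  have hterm_mono : ∀ M N : ℕ, n₀ + 1 ≤ M → M ≤ N → ∀ n ∈ Finset.range n₀,
      f N n ≤ f M n := by
    intro M N hM hMN n hn
    obtain ⟨hdM1, hdM2⟩ := hden M hM n hn
    obtain ⟨hdN1, hdN2⟩ := hden N (hM.trans hMN) n hn
    have hM0 : (0 : ℝ) < M := by
      have : 0 < M := by omega
      exact_mod_cast this
    have hMN' : (M : ℝ) ≤ N := by exact_mod_cast hMN
    apply Real.sqrt_le_sqrt
    have h1 : (n : ℝ) / N ≤ (n : ℝ) / M :=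
      div_le_div_of_nonneg_left (by positivity) hM0 hMN'
    have h2 : ((n : ℝ) + 1) / N ≤ ((n : ℝ) + 1) / M :=
      div_le_div_of_nonneg_left (by positivity) hM0 hMN'
    have hA : c / (1 - (n : ℝ) / N) ≤ c / (1 - (n : ℝ) / M) :=
      div_le_div_of_nonneg_left hc.le hdM1 (by linarith)
    have hB : 1 / (1 - ((n : ℝ) + 1) / N) ≤ 1 / (1 - ((n : ℝ) + 1) / M) :=
      div_le_div_of_nonneg_left one_pos.le hdM2 (by linarith)
    have hApos : 0 ≤ c / (1 - (n : ℝ) / N) := le_of_lt (div_pos hc hdN1)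
    have hBpos : 0 ≤ 1 + 1 / (1 - ((n : ℝ) + 1) / M) := by
      have := div_pos one_pos hdM2
      linarith
    exact mul_le_mul hA (by linarith) (by positivity) (le_trans hApos hA)
  constructor
  · intro M N hM hMN
    have hN : n₀ + 1 ≤ N := hM.trans hMN.le
    have hM0 : (0 : ℝ) < M := by
      have : 0 < M := by omega
      exact_mod_cast this
    have hN0 : (0 : ℝ) < N := by
      have : 0 < N := by omega
      exact_mod_cast this
    have hSle : (∑ n ∈ Finset.range n₀, f N n) ≤ ∑ n ∈ Finset.range n₀, f M n :=
      Finset.sum_le_sum (hterm_mono M N hM hMN.le)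
    have hSMpos : 0 < ∑ n ∈ Finset.range n₀, f M n := by
      apply Finset.sum_pos' (fun n _ => Real.sqrt_nonneg _)
      refine ⟨0, Finset.mem_range.mpr (by omega), ?_⟩
      apply Real.sqrt_pos.mpr
      obtain ⟨h1, h2⟩ := hden M hM 0 (Finset.mem_range.mpr (by omega))
      have hB : 0 < 1 + 1 / (1 - ((0 : ℕ) : ℝ) + 1 / M) := by positivity
      have := div_pos one_pos h2
      exact mul_pos (div_pos hc h1) (by linarith)
    rw [hE M, hE N]
    calc (1 / ((N : ℝ) * K)) * (∑ n ∈ Finset.range n₀, f N n) ^ 2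
        ≤ (1 / ((N : ℝ) * K)) * (∑ n ∈ Finset.range n₀, f M n) ^ 2 := by
          apply mul_le_mul_of_nonneg_left _ (by positivity)
          exact pow_le_pow_left₀ (hS_nonneg N) hSle 2
      _ < (1 / ((M : ℝ) * K)) * (∑ n ∈ Finset.range n₀, f M n) ^ 2 := by
          apply mul_lt_mul_of_pos_right _ (pow_pos hSMpos 2)
          apply one_div_lt_one_div_of_lt (by positivity)
          have : (M : ℝ) < N := by exact_mod_cast hMN
          exact mul_lt_mul_of_pos_right this hK
  · -- limit
    set C : ℝ := 6 * c * (n₀ : ℝ) ^ 2 / K with hC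
    have hEnonneg : ∀ N : ℕ, 0 ≤ E N := by
      intro N
      rw [hE N]
      positivity
    have hbound : ∀ N : ℕ, 2 * n₀ ≤ N → E N ≤ C / N := by
      intro N hN2
      have hN : n₀ + 1 ≤ N := by omega
      have hN0 : (0 : ℝ) < N := by
        have : 0 < N := by omega
        exact_mod_cast this
      have hterm : ∀ n ∈ Finset.range n₀, f N n ≤ Real.sqrt (6 * c) := by
        intro n hn
        have hn' : n < n₀ := Finset.mem_range.mp hn
        obtain ⟨h1, h2⟩ := hden N hN n hn
        apply Real.sqrt_le_sqrt
        have hhalf2 : (1 : ℝ) / 2 ≤ 1 - ((n : ℝ) + 1) / N := by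
          have h3 : ((n : ℝ) + 1) / N ≤ 1 / 2 := by
            rw [div_le_div_iff₀ hN0 two_pos]
            have : 2 * (n + 1) ≤ N := by omega
            have h4 : 2 * ((n : ℝ) + 1) ≤ N := by exact_mod_cast this
            linarith
          linarith
        have hhalf1 : (1 : ℝ) / 2 ≤ 1 - (n : ℝ) / N := by
          have : (n : ℝ) / N ≤ ((n : ℝ) + 1) / N := by
            gcongr
            linarith
          linarith
        have hA : c / (1 - (n : ℝ) / N) ≤ 2 * c := by
          rw [div_le_iff₀ h1]
          nlinarith
        have hB : 1 + 1 / (1 - ((n : ℝ) + 1) / N) ≤ 3 := by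
          have : 1 / (1 - ((n : ℝ) + 1) / N) ≤ 2 := by
            rw [div_le_iff₀ h2]
            linarith
          linarith
        have hApos : 0 ≤ c / (1 - (n : ℝ) / N) := le_of_lt (div_pos hc h1)
        nlinarith [div_pos one_pos h2]
      have hSbound : (∑ n ∈ Finset.range n₀, f N n) ≤ n₀ * Real.sqrt (6 * c) := by
        calc (∑ n ∈ Finset.range n₀, f N n) ≤ ∑ n ∈ Finset.range n₀, Real.sqrt (6 * c) :=
              Finset.sum_le_sum hterm
          _ = n₀ * Real.sqrt (6 * c) := by
              rw [Finset.sum_const, Finset.card_range, nsmul_eq_mul]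
      have hsq : (∑ n ∈ Finset.range n₀, f N n) ^ 2 ≤ (n₀ : ℝ) ^ 2 * (6 * c) := by
        have h6 : (0 : ℝ) ≤ 6 * c := by positivity
        have := pow_le_pow_left₀ (hS_nonneg N) hSbound 2
        calc (∑ n ∈ Finset.range n₀, f N n) ^ 2 ≤ ((n₀ : ℝ) * Real.sqrt (6 * c)) ^ 2 := this
          _ = (n₀ : ℝ) ^ 2 * (6 * c) := by
              rw [mul_pow, Real.sq_sqrt h6]
      rw [hE N]
      have : (1 / ((N : ℝ) * K)) * (∑ n ∈ Finset.range n₀, f N n) ^ 2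
          ≤ (1 / ((N : ℝ) * K)) * ((n₀ : ℝ) ^ 2 * (6 * c)) :=
        mul_le_mul_of_nonneg_left hsq (by positivity)
      calc (1 / ((N : ℝ) * K)) * (∑ n ∈ Finset.range n₀, f N n) ^ 2
          ≤ (1 / ((N : ℝ) * K)) * ((n₀ : ℝ) ^ 2 * (6 * c)) := this
        _ = C / N := by
            rw [hC]; field_simp
    apply squeeze_zero' (Eventually.of_forall hEnonneg)
    · filter_upwards [eventually_ge_atTop (2 * n₀)] with N hN
      exact hbound N hN
    · exact tendsto_const_div_atTop_nhds_zero_nat C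
end
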